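/- arXiv:1112.4147 — 5 statements merged into one kernel-verified Lean document; each statement's English description precedes it below -/
import Mathlib

section
/- Let C ⊂ ℝ³ be a C² injective compact curve. Then there exists ε > 0 such that for every x ∈ ℝ³ with infDist x C < ε there exists a unique point y ∈ C with dist x y = infDist x C. -/
open MeasureTheory Metric Set Filter
open scoped RealInnerProductSpace ContDiff SchwartzMap

noncomputable section

abbrev E3 := EuclideanSpace ℝ (Fin 3)

/-!
If `x` lies within `ε` of the curve and `γ s`, `γ t` are two nearest points, then they are within
`2ε` of each other, so by compactness and injectivity `|s - t|` is small and the whole arc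
`γ '' [s, t]` stays close to `x`. There the second derivative `2 (‖γ'‖² - ⟪x - γ, γ''⟫)` of the
squared distance `u ↦ ‖x - γ u‖²` is positive, since `‖γ'‖ = 1` while `‖γ''‖` is bounded.
A strictly convex function has at most one minimiser on `[s, t]`, hence `s = t`.
-/

theorem IsCompact.exists_pos_forall_dist_lt_of_injOn {α β : Type*} [MetricSpace α]
    [MetricSpace β] {f : α → β} {s : Set α} (hs : IsCompact s) (hf : ContinuousOn f s)
    (hinj : InjOn f s) {δ : ℝ} (hδ : 0 < δ) :
    ∃ η > 0, ∀ a ∈ s, ∀ b ∈ s, dist (f a) (f b) < η → dist a b < δ := by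
  set S : Set (α × α) := (s ×ˢ s) ∩ {p | δ ≤ dist p.1 p.2}
  have hS : IsCompact S :=
    (hs.prod hs).inter_right (isClosed_le continuous_const continuous_dist)
  rcases S.eq_empty_or_nonempty with hempty | hne
  · refine ⟨1, one_pos, fun a ha b hb _ => not_le.mp fun hab => ?_⟩
    exact hempty.subset (⟨⟨ha, hb⟩, hab⟩ : (a, b) ∈ S)
  · have hfS : ContinuousOn (fun p : α × α => dist (f p.1) (f p.2)) S :=
      continuous_dist.comp_continuousOn
        ((hf.comp continuousOn_fst fun p (hp : p ∈ S) => hp.1.1).prodMk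
          (hf.comp continuousOn_snd fun p (hp : p ∈ S) => hp.1.2))
    obtain ⟨⟨a₀, b₀⟩, ⟨⟨ha₀, hb₀⟩, hδ₀⟩, hmin⟩ := hS.exists_isMinOn hne hfS
    have hf₀ : f a₀ ≠ f b₀ := fun h => by
      have hδ₀' : δ ≤ dist a₀ b₀ := hδ₀
      rw [hinj (x₁ := a₀) ha₀ hb₀ h, dist_self] at hδ₀'
      exact hδ₀'.not_gt hδ
    refine ⟨_, dist_pos.mpr hf₀, fun a ha b hb hab => not_le.mp fun hδab => ?_⟩
    exact hab.not_ge (hmin (⟨⟨ha, hb⟩, hδab⟩ : (a, b) ∈ S))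

section SquaredDistance

variable {F : Type*} [NormedAddCommGroup F] [InnerProductSpace ℝ F] {γ : ℝ → F}

theorem strictConvexOn_norm_sub_sq (x : F) (hγ : ContDiff ℝ 2 γ) {D : Set ℝ}
    (hD : Convex ℝ D) (h : ∀ u ∈ interior D, ⟪x - γ u, deriv (deriv γ) u⟫ < ‖deriv γ u‖ ^ 2) :
    StrictConvexOn ℝ D (fun u => ‖x - γ u‖ ^ 2) := by
  have hγ₁ : ContDiff ℝ 1 (deriv γ) := hγ.deriv' (n := 1)
  have hd₁ (u : ℝ) : HasDerivAt γ (deriv γ u) u :=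
    (hγ.differentiable (by norm_num) u).hasDerivAt
  have hd₂ (u : ℝ) : HasDerivAt (deriv γ) (deriv (deriv γ) u) u :=
    (hγ₁.differentiable one_ne_zero u).hasDerivAt
  have hf' : deriv (fun u => ‖x - γ u‖ ^ 2) = fun u => -(2 * ⟪x - γ u, deriv γ u⟫) := by
    funext u
    simpa [inner_neg_right] using ((hd₁ u).const_sub x).norm_sq.deriv
  refine strictConvexOn_of_deriv2_pos hD
    ((continuous_const.sub hγ.continuous).norm.pow 2).continuousOn fun u hu => ?_
  have hf'' : HasDerivAt (deriv fun u => ‖x - γ u‖ ^ 2)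
      (2 * (‖deriv γ u‖ ^ 2 - ⟪x - γ u, deriv (deriv γ) u⟫)) u := by
    rw [hf']
    refine ((((hd₁ u).const_sub x).inner ℝ (hd₂ u)).const_mul 2).neg.congr_deriv ?_
    rw [inner_neg_left, real_inner_self_eq_norm_sq]
    ring
  rw [Function.iterate_succ_apply', Function.iterate_one, hf''.deriv]
  linarith [h u hu]

theorem strictConvexOn_norm_sub_sq_Icc (x : F) (hγ : ContDiff ℝ 2 γ) {s t K : ℝ}
    (hunit : ∀ u ∈ Icc s t, ‖deriv γ u‖ = 1) (hK : ∀ u ∈ Icc s t, ‖deriv (deriv γ) u‖ ≤ K)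
    (hnear : (‖x - γ s‖ + (t - s)) * K < 1) :
    StrictConvexOn ℝ (Icc s t) (fun u => ‖x - γ u‖ ^ 2) := by
  refine strictConvexOn_norm_sub_sq x hγ (convex_Icc s t) fun u hu => ?_
  rw [interior_Icc] at hu
  have hu' : u ∈ Icc s t := Ioo_subset_Icc_self hu
  have hlip : ‖γ u - γ s‖ ≤ 1 * (u - s) :=
    norm_image_sub_le_of_norm_deriv_le_segment'
      (fun v _ => (hγ.differentiable (by norm_num) v).hasDerivAt.hasDerivWithinAt)
      (fun v hv => (hunit v (Ico_subset_Icc_self hv)).le) u hu'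
  have hdist : ‖x - γ u‖ ≤ ‖x - γ s‖ + (t - s) := by
    have htri := norm_sub_le_norm_sub_add_norm_sub x (γ s) (γ u)
    rw [norm_sub_rev (γ s)] at htri
    linarith [hu.2]
  calc ⟪x - γ u, deriv (deriv γ) u⟫ ≤ ‖x - γ u‖ * ‖deriv (deriv γ) u‖ := real_inner_le_norm _ _
    _ ≤ (‖x - γ s‖ + (t - s)) * K :=
      mul_le_mul hdist (hK u hu') (norm_nonneg _) ((norm_nonneg _).trans hdist)
    _ < 1 := hnear
    _ = ‖deriv γ u‖ ^ 2 := by rw [hunit u hu', one_pow]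

theorem eq_of_dist_eq_infDist (x : F) (hγ : ContDiff ℝ 2 γ) {s t K : ℝ} {C : Set F}
    (hunit : ∀ u ∈ Icc s t, ‖deriv γ u‖ = 1) (hK : ∀ u ∈ Icc s t, ‖deriv (deriv γ) u‖ ≤ K)
    (hnear : (dist x (γ s) + (t - s)) * K < 1) (hC : MapsTo γ (Icc s t) C) (hst : s ≤ t)
    (hs : dist x (γ s) = infDist x C) (ht : dist x (γ t) = infDist x C) : s = t := by
  have hmin {r : ℝ} (hr : dist x (γ r) = infDist x C) :
      IsMinOn (fun u => ‖x - γ u‖ ^ 2) (Icc s t) r := fun u hu => by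
    simp only [mem_ofPred_eq, ← dist_eq_norm, hr]
    gcongr
    · exact infDist_nonneg
    · exact infDist_le_dist_of_mem (hC hu)
  rw [dist_eq_norm] at hnear
  exact (strictConvexOn_norm_sub_sq_Icc x hγ hunit hK hnear).eq_of_isMinOn (hmin hs) (hmin ht)
    (left_mem_Icc.mpr hst) (right_mem_Icc.mpr hst)

end SquaredDistance

/-- A C² injective compact curve has a tubular neighborhood in which every point
has a unique nearest point on the curve. -/
theorem unique_nearest_point_of_C2_curve
    (γ : ℝ → E3) (L : ℝ) (hL : 0 < L)
    (hγ : ContDiff ℝ 2 γ) (hγinj : Set.InjOn γ (Set.Icc 0 L))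
    (harc : ∀ s ∈ Set.Icc (0:ℝ) L, ‖deriv γ s‖ = 1)
    (C : Set E3) (hC : C = γ '' Set.Icc 0 L) :
    ∃ ε > 0, ∀ x : E3, Metric.infDist x C < ε →
      ∃! y, y ∈ C ∧ dist x y = Metric.infDist x C := by
  subst hC
  obtain ⟨K, hK⟩ := isCompact_Icc.exists_bound_of_continuousOn
    ((hγ.deriv' (n := 1)).continuous_deriv le_rfl).continuousOn
  have hK₀ : 0 ≤ K := (norm_nonneg _).trans (hK 0 (left_mem_Icc.mpr hL.le))
  obtain ⟨ρ, hρ, hKρ⟩ := exists_pos_mul_lt one_pos K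
  obtain ⟨η, hη, hinv⟩ := isCompact_Icc.exists_pos_forall_dist_lt_of_injOn
    hγ.continuous.continuousOn hγinj (half_pos hρ)
  refine ⟨min (ρ / 2) (η / 2), by positivity, fun x hx => ?_⟩
  have hxρ := hx.trans_le (min_le_left _ _)
  have hxη := hx.trans_le (min_le_right _ _)
  have key : ∀ s ∈ Icc 0 L, ∀ t ∈ Icc 0 L, s ≤ t → dist x (γ s) = infDist x (γ '' Icc 0 L) →
      dist x (γ t) = infDist x (γ '' Icc 0 L) → s = t := by
    intro s hs t ht hst hxs hxt
    have hclose : dist s t < ρ / 2 :=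
      hinv s hs t ht (by linarith [dist_triangle_left (γ s) (γ t) x])
    have hsub : Icc s t ⊆ Icc 0 L := Icc_subset_Icc hs.1 ht.2
    refine eq_of_dist_eq_infDist x hγ (fun u hu => harc u (hsub hu)) (fun u hu => hK u (hsub hu))
      ?_ (fun u hu => mem_image_of_mem γ (hsub hu)) hst hxs hxt
    rw [Real.dist_eq, abs_sub_comm, abs_of_nonneg (sub_nonneg.mpr hst)] at hclose
    calc (dist x (γ s) + (t - s)) * K ≤ ρ * K := by gcongr; linarith
      _ < 1 := by rwa [mul_comm]
  obtain ⟨_, ⟨s, hs, rfl⟩, hxs⟩ := (isCompact_Icc.image hγ.continuous).exists_infDist_eq_dist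
    ⟨γ 0, mem_image_of_mem γ (left_mem_Icc.mpr hL.le)⟩ x
  refine ⟨γ s, ⟨mem_image_of_mem γ hs, hxs.symm⟩, ?_⟩
  rintro _ ⟨⟨t, ht, rfl⟩, hxt⟩
  rcases le_total s t with hst | hts
  · exact congrArg γ (key s hs t ht hst hxs.symm hxt).symm
  · exact congrArg γ (key t ht s hs hts hxt hxs.symm)
end
end

section
/- Let C ⊂ ℝ³ be a C² injective compact curve and η_n the cutoff functions built from a smooth profile χ. Then there exist n₀ ∈ ℕ and a constant C₀ > 0 such that for every natural number n > n₀, the Lebesgue measure of the topological support of the function x ↦ 1 − η_n(x) is at most C₀ / n². -/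
open MeasureTheory Metric Set Filter
open scoped RealInnerProductSpace ContDiff SchwartzMap

noncomputable section

/-- The support of `1 - η_n`, where `η_n(x) = χ(n · d(x, C))` is the cutoff around a C²
injective compact curve, has Lebesgue measure O(1/n²). -/
theorem cutoff_support_measure_bound_of_C2_curve
    (γ : ℝ → E3) (L : ℝ) (hL : 0 < L)
    (hγ : ContDiff ℝ 2 γ) (hγinj : Set.InjOn γ (Set.Icc 0 L))
    (harc : ∀ s ∈ Set.Icc (0:ℝ) L, ‖deriv γ s‖ = 1)
    (C : Set E3) (hC : C = γ '' Set.Icc 0 L)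
    (χ : ℝ → ℝ) (hχ : ContDiff ℝ ∞ χ)
    (hχ0 : ∀ s : ℝ, s < 1 → χ s = 0) (hχ1 : ∀ s : ℝ, 2 < s → χ s = 1)
    (η : ℕ → E3 → ℝ) (hη : ∀ n x, η n x = χ (n * Metric.infDist x C)) :
    ∃ n₀ : ℕ, ∃ C₀ > 0, ∀ n : ℕ, n > n₀ →
      volume (tsupport fun x : E3 => 1 - η n x) ≤ ENNReal.ofReal (C₀ / n ^ 2) := by
  -- volume of unit ball
  set B : ENNReal := volume (ball (0 : E3) 1) with hB
  have hBpos : 0 < B := measure_ball_pos volume 0 one_pos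
  have hBfin : B ≠ ⊤ := measure_ball_lt_top.ne
  have hBtpos : 0 < B.toReal := ENNReal.toReal_pos hBpos.ne' hBfin
  refine ⟨0, 32 * (L + 2) * B.toReal, by positivity, fun n hn => ?_⟩
  have hn1 : (1 : ℝ) ≤ n := by exact_mod_cast hn
  have hnpos : (0 : ℝ) < n := lt_of_lt_of_le one_pos hn1
  set r : ℝ := 2 / n with hrdef
  have hr0 : 0 < r := by positivity
  have hr2 : r ≤ 2 := by
    rw [hrdef, div_le_iff₀ hnpos]; nlinarith
  -- C is compact and nonempty
  have hCcomp : IsCompact C := hC ▸ (isCompact_Icc.image hγ.continuous)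
  have hCne : C.Nonempty := hC ▸ ⟨γ 0, ⟨0, ⟨le_rfl, hL.le⟩, rfl⟩⟩
  -- Step A: tsupport ⊆ T
  set T : Set E3 := {x | infDist x C ≤ r} with hT
  have hTclosed : IsClosed T :=
    isClosed_Iic.preimage (continuous_infDist_pt C)
  have hsub : tsupport (fun x : E3 => 1 - η n x) ⊆ T := by
    apply closure_minimal _ hTclosed
    intro x hx
    by_contra hxT
    have hgt : r < infDist x C := lt_of_not_ge hxT
    have h2 : (2 : ℝ) < n * infDist x C := by
      have : n * r < n * infDist x C := by
        exact mul_lt_mul_of_pos_left hgt hnpos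
      rw [hrdef] at this
      rw [mul_div_cancel₀ 2 hnpos.ne'] at this
      linarith
    have : 1 - η n x = 0 := by rw [hη, hχ1 _ h2]; ring
    exact hx this
  -- Step B: covering of T by balls
  set N : ℕ := ⌊L / r⌋₊ + 1 with hN
  have hlip : ∀ a ∈ Icc (0:ℝ) L, ∀ b ∈ Icc (0:ℝ) L, ‖γ b - γ a‖ ≤ |b - a| := by
    intro a ha b hb
    have := (convex_Icc (0:ℝ) L).norm_image_sub_le_of_norm_deriv_le
      (fun x _ => (hγ.differentiable (by norm_num)).differentiableAt)
      (fun x hx => (harc x hx).le) ha hb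
    simpa using this
  have hcover : T ⊆ ⋃ i ∈ Finset.range N, closedBall (γ (i * r)) (2 * r) := by
    intro x hx
    obtain ⟨y, hy, hyd⟩ := hCcomp.exists_infDist_eq_dist hCne x
    rw [hC] at hy
    obtain ⟨s, hs, rfl⟩ := hy
    have hs0 : 0 ≤ s := hs.1
    have hsr : 0 ≤ s / r := div_nonneg hs0 hr0.le
    set i : ℕ := ⌊s / r⌋₊ with hi
    have hiN : i < N := by
      have : (⌊s / r⌋₊ : ℕ) ≤ ⌊L / r⌋₊ :=
        Nat.floor_le_floor (div_le_div_of_nonneg_right hs.2 hr0.le)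
      omega
    have hir_le : (i : ℝ) * r ≤ s := by
      have := Nat.floor_le hsr
      calc (i : ℝ) * r ≤ (s / r) * r := by
            exact mul_le_mul_of_nonneg_right this hr0.le
        _ = s := div_mul_cancel₀ s hr0.ne'
    have hir_gt : s - (i : ℝ) * r < r := by
      have := Nat.lt_floor_add_one (s / r)
      have h2 : s < ((i : ℝ) + 1) * r := by
        have := mul_lt_mul_of_pos_right this hr0
        rwa [div_mul_cancel₀ s hr0.ne'] at this
      nlinarith
    have hir_mem : (i : ℝ) * r ∈ Icc (0:ℝ) L := by
      constructor
      · positivity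
      · linarith [hs.2]
    refine mem_iUnion₂.2 ⟨i, Finset.mem_range.2 hiN, ?_⟩
    rw [mem_closedBall]
    have h1 : dist x (γ s) ≤ r := by rw [← hyd]; exact hx
    have h2 : dist (γ s) (γ (i * r)) ≤ r := by
      rw [dist_eq_norm]
      calc ‖γ s - γ (↑i * r)‖ ≤ |s - ↑i * r| := hlip _ hir_mem _ hs
        _ ≤ r := by rw [abs_of_nonneg (by linarith)]; linarith
    calc dist x (γ (↑i * r)) ≤ dist x (γ s) + dist (γ s) (γ (↑i * r)) := dist_triangle _ _ _
      _ ≤ 2 * r := by linarith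
  -- Step C: measure estimates
  have hballs : ∀ i : ℕ, volume (closedBall (γ (i * r)) (2 * r))
      = ENNReal.ofReal ((2 * r) ^ 3) * B := by
    intro i
    rw [Measure.addHaar_closedBall volume _ (by positivity : (0:ℝ) ≤ 2 * r)]
    congr 2
    simp [finrank_euclideanSpace]
  have key : volume T ≤ (N : ENNReal) * (ENNReal.ofReal ((2 * r) ^ 3) * B) := by
    calc volume T ≤ volume (⋃ i ∈ Finset.range N, closedBall (γ (i * r)) (2 * r)) :=
          measure_mono hcover
      _ ≤ ∑ i ∈ Finset.range N, volume (closedBall (γ (i * r)) (2 * r)) :=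
          measure_biUnion_finset_le _ _
      _ = (N : ENNReal) * (ENNReal.ofReal ((2 * r) ^ 3) * B) := by
          simp only [hballs]
          rw [Finset.sum_const, Finset.card_range, nsmul_eq_mul]
  -- numeric bound
  have hNle : (N : ℝ) ≤ L / r + 1 := by
    have := Nat.floor_le (div_nonneg hL.le hr0.le)
    push_cast [hN]
    linarith
  have hfinal : (N : ℝ) * ((2 * r) ^ 3) ≤ 32 * (L + 2) / n ^ 2 := by
    have hr_sq : r ^ 2 = 4 / n ^ 2 := by
      rw [hrdef]; field_simp; ring
    have h1 : (N : ℝ) * ((2 * r) ^ 3) ≤ (L / r + 1) * (8 * r ^ 3) := by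
      have : (0:ℝ) ≤ (2 * r) ^ 3 := by positivity
      nlinarith
    have h2 : (L / r + 1) * (8 * r ^ 3) = 8 * L * r ^ 2 + 8 * r ^ 3 := by
      field_simp
    have h3 : 8 * r ^ 3 ≤ 16 * r ^ 2 := by nlinarith
    calc (N : ℝ) * ((2 * r) ^ 3) ≤ 8 * L * r ^ 2 + 8 * r ^ 3 := by rw [← h2]; exact h1
      _ ≤ 8 * (L + 2) * r ^ 2 := by nlinarith
      _ = 32 * (L + 2) / n ^ 2 := by rw [hr_sq]; field_simp; ring
  calc volume (tsupport fun x : E3 => 1 - η n x) ≤ volume T := measure_mono hsub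
    _ ≤ (N : ENNReal) * (ENNReal.ofReal ((2 * r) ^ 3) * B) := key
    _ = ENNReal.ofReal ((N : ℝ) * ((2 * r) ^ 3) * B.toReal) := by
        rw [← ENNReal.ofReal_natCast N, ← ENNReal.ofReal_toReal hBfin,
          ← ENNReal.ofReal_mul (by positivity), ← ENNReal.ofReal_mul (by positivity),
          ENNReal.toReal_ofReal ENNReal.toReal_nonneg, mul_assoc]
    _ ≤ ENNReal.ofReal (32 * (L + 2) * B.toReal / n ^ 2) := by
        apply ENNReal.ofReal_le_ofReal
        have := mul_le_mul_of_nonneg_right hfinal hBtpos.le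
        calc (N : ℝ) * ((2 * r) ^ 3) * B.toReal
            ≤ 32 * (L + 2) / n ^ 2 * B.toReal := this
          _ = 32 * (L + 2) * B.toReal / n ^ 2 := by ring
end
end

section
/- There exists a constant C > 0 such that for every smooth compactly supported vector field u : ℝ³ → ℝ³, one has ‖u‖_{L⁴(ℝ³)} ≤ C · ‖u‖_{L²(ℝ³)}^{1/4} · ‖∇u‖_{L²(ℝ³)}^{3/4}, where ‖∇u‖_{L²} denotes the L² norm of the function x ↦ ‖fderiv ℝ u x‖. -/
/-!
The `L⁴` norm interpolates between `L²` and `L⁶`: Hölder's inequality applied to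
`|u|⁴ = (|u|²)^{1/2} (|u|⁶)^{1/2}` gives `‖u‖₄ ≤ ‖u‖₂^{1/4} ‖u‖₆^{3/4}`. In dimension three `6` is the Sobolev
exponent of `2`, so the Gagliardo–Nirenberg–Sobolev inequality `‖u‖₆ ≤ C ‖∇u‖₂` bounds the
second factor.
-/

open MeasureTheory Metric Set Filter
open scoped RealInnerProductSpace ContDiff SchwartzMap

noncomputable section

open scoped ENNReal NNReal

namespace MeasureTheory

section Interpolation

variable {α E : Type*} [MeasurableSpace α] {μ : Measure α} [NormedAddCommGroup E] {f : α → E}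

theorem eLpNorm'_le_eLpNorm'_rpow_mul_eLpNorm'_rpow (hf : AEStronglyMeasurable f μ)
    {p q r θ : ℝ} (hp : 0 < p) (hq : 0 < q) (hr : 0 < r) (hθ₀ : 0 ≤ θ) (hθ₁ : θ ≤ 1)
    (hpqr : r⁻¹ = θ / p + (1 - θ) / q) :
    eLpNorm' f r μ ≤ eLpNorm' f p μ ^ θ * eLpNorm' f q μ ^ (1 - θ) := by
  have ha : 0 ≤ θ * r / p := by positivity
  have hb : 0 ≤ (1 - θ) * r / q := div_nonneg (mul_nonneg (sub_nonneg.2 hθ₁) hr.le) hq.le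
  have hab : θ * r / p + (1 - θ) * r / q = 1 := by
    field_simp at hpqr ⊢
    linarith
  have hsplit : ∀ x,
      ‖f x‖ₑ ^ r = (‖f x‖ₑ ^ p) ^ (θ * r / p) * (‖f x‖ₑ ^ q) ^ ((1 - θ) * r / q) := by
    intro x
    rw [← ENNReal.rpow_mul, ← ENNReal.rpow_mul,
      ← ENNReal.rpow_add_of_nonneg _ _ (by positivity) (mul_nonneg hq.le hb)]
    congr 1
    field_simp at hab ⊢
    linarith
  have hHolder : ∫⁻ x, ‖f x‖ₑ ^ r ∂μ ≤
      (∫⁻ x, ‖f x‖ₑ ^ p ∂μ) ^ (θ * r / p) * (∫⁻ x, ‖f x‖ₑ ^ q ∂μ) ^ ((1 - θ) * r / q) := by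
    simp_rw [hsplit]
    exact ENNReal.lintegral_mul_norm_pow_le (hf.enorm.pow_const p) (hf.enorm.pow_const q) ha hb hab
  calc eLpNorm' f r μ
      ≤ ((∫⁻ x, ‖f x‖ₑ ^ p ∂μ) ^ (θ * r / p) * (∫⁻ x, ‖f x‖ₑ ^ q ∂μ) ^ ((1 - θ) * r / q))
          ^ (1 / r) := ENNReal.rpow_le_rpow hHolder (by positivity)
    _ = eLpNorm' f p μ ^ θ * eLpNorm' f q μ ^ (1 - θ) := by
      rw [ENNReal.mul_rpow_of_nonneg _ _ (by positivity), eLpNorm', eLpNorm',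
        ← ENNReal.rpow_mul, ← ENNReal.rpow_mul, ← ENNReal.rpow_mul, ← ENNReal.rpow_mul]
      congr 2 <;> field_simp

theorem lpNorm_le_lpNorm_rpow_mul_lpNorm_rpow {p q r : ℝ≥0} (hfp : MemLp f p μ)
    (hfq : MemLp f q μ) (hp : 0 < p) (hq : 0 < q) {θ : ℝ} (hθ₀ : 0 ≤ θ) (hθ₁ : θ ≤ 1)
    (hpqr : (r : ℝ)⁻¹ = θ / p + (1 - θ) / q) :
    lpNorm f r μ ≤ lpNorm f p μ ^ θ * lpNorm f q μ ^ (1 - θ) := by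
  rcases eq_or_ne r 0 with rfl | hr
  · simp only [ENNReal.coe_zero, lpNorm_exponent_zero]
    exact mul_nonneg (Real.rpow_nonneg lpNorm_nonneg _) (Real.rpow_nonneg lpNorm_nonneg _)
  have hf := hfp.aestronglyMeasurable
  have hfin : eLpNorm f p μ ^ θ * eLpNorm f q μ ^ (1 - θ) ≠ ⊤ :=
    ENNReal.mul_ne_top (ENNReal.rpow_ne_top_of_nonneg hθ₀ hfp.eLpNorm_ne_top)
      (ENNReal.rpow_ne_top_of_nonneg (sub_nonneg.2 hθ₁) hfq.eLpNorm_ne_top)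
  rw [← toReal_eLpNorm hf, ← toReal_eLpNorm hf, ← toReal_eLpNorm hf, ENNReal.toReal_rpow,
    ENNReal.toReal_rpow, ← ENNReal.toReal_mul]
  refine ENNReal.toReal_mono hfin ?_
  simp only [eLpNorm_nnreal_eq_eLpNorm' hp.ne', eLpNorm_nnreal_eq_eLpNorm' hq.ne',
    eLpNorm_nnreal_eq_eLpNorm' hr]
  exact eLpNorm'_le_eLpNorm'_rpow_mul_eLpNorm'_rpow hf hp hq
    (NNReal.coe_pos.2 (pos_iff_ne_zero.2 hr)) hθ₀ hθ₁ hpqr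

theorem lpNorm_natCast_eq_integral_norm_pow (hf : AEStronglyMeasurable f μ) {n : ℕ}
    (hn : n ≠ 0) : lpNorm f n μ = (∫ x, ‖f x‖ ^ n ∂μ) ^ ((1 : ℝ) / n) := by
  rw [← ENNReal.coe_natCast, lpNorm_nnreal_eq_integral_norm_rpow (by simpa using hn) hf]
  simp

end Interpolation

section Sobolev

open Module

variable {E F : Type*} [NormedAddCommGroup E] [NormedSpace ℝ E] [MeasurableSpace E]
  [BorelSpace E] [FiniteDimensional ℝ E] (μ : Measure E) [μ.IsAddHaarMeasure]
  [NormedAddCommGroup F] [NormedSpace ℝ F] [FiniteDimensional ℝ F]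

theorem lpNorm_le_lpNorm_fderiv_of_eq {u : E → F} (hu : ContDiff ℝ 1 u)
    (h2u : HasCompactSupport u) {p p' : ℝ≥0} (hp : 1 ≤ p) (hn : 0 < finrank ℝ E)
    (hp' : (p' : ℝ)⁻¹ = p⁻¹ - (finrank ℝ E : ℝ)⁻¹) :
    lpNorm u p' μ ≤ SNormLESNormFDerivOfEqConst F μ p * lpNorm (fderiv ℝ u) p μ := by
  have hDu : MemLp (fderiv ℝ u) p μ :=
    (hu.continuous_fderiv one_ne_zero).memLp_of_hasCompactSupport (h2u.fderiv ℝ)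
  rw [← toReal_eLpNorm hu.continuous.aestronglyMeasurable, ← toReal_eLpNorm hDu.1,
    ← ENNReal.coe_toReal, ← ENNReal.toReal_mul]
  exact ENNReal.toReal_mono (ENNReal.mul_ne_top ENNReal.coe_ne_top hDu.eLpNorm_ne_top)
    (eLpNorm_le_eLpNorm_fderiv_of_eq μ hu h2u hp hn hp')

theorem lpNorm_le_lpNorm_rpow_mul_lpNorm_fderiv_rpow {u : E → F} (hu : ContDiff ℝ 1 u)
    (h2u : HasCompactSupport u) {p q q' r : ℝ≥0} (hp : 0 < p) (hq : 1 ≤ q) (hq'₀ : 0 < q')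
    (hn : 0 < finrank ℝ E) (hq' : (q' : ℝ)⁻¹ = q⁻¹ - (finrank ℝ E : ℝ)⁻¹) {θ : ℝ}
    (hθ₀ : 0 ≤ θ) (hθ₁ : θ ≤ 1) (hpqr : (r : ℝ)⁻¹ = θ / p + (1 - θ) / q') :
    lpNorm u r μ ≤ (SNormLESNormFDerivOfEqConst F μ q : ℝ) ^ (1 - θ) * lpNorm u p μ ^ θ
      * lpNorm (fderiv ℝ u) q μ ^ (1 - θ) := by
  have hmem : ∀ s, MemLp u s μ := fun s => hu.continuous.memLp_of_hasCompactSupport h2u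
  calc lpNorm u r μ
      ≤ lpNorm u p μ ^ θ * lpNorm u q' μ ^ (1 - θ) :=
        lpNorm_le_lpNorm_rpow_mul_lpNorm_rpow (hmem _) (hmem _) hp hq'₀ hθ₀ hθ₁ hpqr
    _ ≤ lpNorm u p μ ^ θ
          * (SNormLESNormFDerivOfEqConst F μ q * lpNorm (fderiv ℝ u) q μ) ^ (1 - θ) := by
        gcongr
        · exact Real.rpow_nonneg lpNorm_nonneg _
        · exact lpNorm_nonneg
        · exact lpNorm_le_lpNorm_fderiv_of_eq μ hu h2u hq hn hq'
    _ = _ := by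
        rw [Real.mul_rpow NNReal.zero_le_coe lpNorm_nonneg]
        ring

end Sobolev

end MeasureTheory

/-- Gagliardo–Nirenberg–Sobolev-type interpolation inequality in ℝ³:
`‖u‖_{L⁴} ≤ C ‖u‖_{L²}^{1/4} ‖∇u‖_{L²}^{3/4}` for smooth compactly supported fields. -/
theorem L4_interpolation_inequality :
    ∃ c > 0, ∀ u : E3 → E3, ContDiff ℝ ∞ u → HasCompactSupport u →
      (∫ x : E3, ‖u x‖ ^ 4) ^ ((1:ℝ)/4) ≤
        c * ((∫ x : E3, ‖u x‖ ^ 2) ^ ((1:ℝ)/2)) ^ ((1:ℝ)/4)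
          * ((∫ x : E3, ‖fderiv ℝ u x‖ ^ 2) ^ ((1:ℝ)/2)) ^ ((3:ℝ)/4) := by
  set C : ℝ≥0 := SNormLESNormFDerivOfEqConst E3 (volume : Measure E3) 2
  refine ⟨(C : ℝ) ^ ((3:ℝ)/4) + 1, by positivity, fun u hu h2u => ?_⟩
  have hu1 : ContDiff ℝ 1 u := hu.of_le (by exact_mod_cast le_top)
  have hGN := lpNorm_le_lpNorm_rpow_mul_lpNorm_fderiv_rpow volume hu1 h2u
    (p := 2) (q := 2) (q' := 6) (r := 4) (θ := 1/4) (by norm_num) (by norm_num) (by norm_num)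
    (by simp) (by simp; norm_num) (by norm_num) (by norm_num) (by norm_num)
  have hL : ∀ {G : Type} [NormedAddCommGroup G] {f : E3 → G} {n : ℕ}, Continuous f → n ≠ 0 →
      (∫ x : E3, ‖f x‖ ^ n) ^ ((1:ℝ)/n) = lpNorm f n volume :=
    fun hf hn => (lpNorm_natCast_eq_integral_norm_pow hf.aestronglyMeasurable hn).symm
  have h4 := hL hu.continuous four_ne_zero
  have h2 := hL hu.continuous two_ne_zero
  have hD := hL (hu1.continuous_fderiv one_ne_zero) two_ne_zero
  norm_num at h4 h2 hD hGN
  rw [h4, h2, hD]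
  refine hGN.trans (mul_le_mul_of_nonneg_right
    (mul_le_mul_of_nonneg_right (le_add_of_nonneg_right zero_le_one) ?_) ?_)
  · exact Real.rpow_nonneg lpNorm_nonneg _
  · exact Real.rpow_nonneg lpNorm_nonneg _
end
end

section
/- Let ω₀ : ℝ³ → ℝ³ be a smooth compactly supported vector field and define v₀(x) = −∫_{ℝ³} (4π‖x−y‖³)⁻¹ • ((x−y) × ω₀(y)) dy. Then v₀ is continuous on ℝ³, there exist constants C > 0 and R > 0 such that ‖v₀(x)‖ ≤ C / ‖x‖² whenever ‖x‖ ≥ R, and consequently v₀ ∈ L^p(ℝ³; ℝ³) (MemLp v₀ p) for every p with 3/2 < p ≤ ∞. -/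
open MeasureTheory Metric Set Filter
open scoped RealInnerProductSpace ContDiff SchwartzMap

noncomputable section

/-- The cross product of vectors in ℝ³. -/
def cross3 (a b : E3) : E3 :=
  WithLp.toLp 2 ![a 1 * b 2 - a 2 * b 1, a 2 * b 0 - a 0 * b 2, a 0 * b 1 - a 1 * b 0]

/-- The divergence of a vector field on ℝ³, with partial derivatives taken along the
standard basis vectors via `fderiv`. -/
def div3 (v : E3 → E3) (x : E3) : ℝ :=
  ∑ i, fderiv ℝ v x (EuclideanSpace.single i 1) i

/-- The curl of a vector field on ℝ³, with partial derivatives taken along the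
standard basis vectors via `fderiv`. -/
def curl3 (Φ : E3 → E3) (x : E3) : E3 :=
  WithLp.toLp 2 ![fderiv ℝ Φ x (EuclideanSpace.single 1 1) 2 - fderiv ℝ Φ x (EuclideanSpace.single 2 1) 1,
    fderiv ℝ Φ x (EuclideanSpace.single 2 1) 0 - fderiv ℝ Φ x (EuclideanSpace.single 0 1) 2,
    fderiv ℝ Φ x (EuclideanSpace.single 0 1) 1 - fderiv ℝ Φ x (EuclideanSpace.single 1 1) 0]

open Module
open scoped ENNReal Convolution

/-! The velocity is `-(K ⋆ ω₀)` for the kernel `K t = t / (4π‖t‖³)`, convolved through the cross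
product. As `‖K t‖ = 1 / (4π‖t‖²)` is locally integrable in ℝ³, the convolution with a continuous
compactly supported field is continuous. Once `‖x‖` is at least twice the radius of the support,
`‖x - y‖ ≥ ‖x‖ / 2` for every `y` in the support, which gives the `‖x‖⁻²` decay. Together with
boundedness on compact sets this yields a global bound `C / (1 + ‖x‖)²`, whose `p`-th power is
integrable on ℝ³ as soon as `2p > 3`. -/

lemma cross3_eq_crossProduct (a b : E3) :
    cross3 a b = WithLp.toLp 2 (crossProduct a.ofLp b.ofLp) :=
  rfl

lemma norm_cross3_le (a b : E3) : ‖cross3 a b‖ ≤ ‖a‖ * ‖b‖ := by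
  have lagrange : ‖cross3 a b‖ ^ 2 = ‖a‖ ^ 2 * ‖b‖ ^ 2 - ⟪a, b⟫ ^ 2 := by
    simp only [← real_inner_self_eq_norm_sq, cross3_eq_crossProduct,
      EuclideanSpace.inner_eq_star_dotProduct]
    simp only [star_trivial, cross_dot_cross, dotProduct_comm b.ofLp, sub_right_inj]
    ring
  exact (pow_le_pow_iff_left₀ (norm_nonneg _) (by positivity) two_ne_zero).1
    (by rw [lagrange, mul_pow]; nlinarith [sq_nonneg ⟪a, b⟫])

def cross3L : E3 →L[ℝ] E3 →L[ℝ] E3 :=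
  LinearMap.mkContinuous₂
    ((crossProduct.compl₁₂ (WithLp.linearEquiv 2 ℝ (Fin 3 → ℝ)).toLinearMap
      (WithLp.linearEquiv 2 ℝ (Fin 3 → ℝ)).toLinearMap).compr₂
      (WithLp.linearEquiv 2 ℝ (Fin 3 → ℝ)).symm.toLinearMap)
    1 fun a b => by simpa [← cross3_eq_crossProduct] using norm_cross3_le a b

@[simp] lemma cross3L_apply (a b : E3) : cross3L a b = cross3 a b := rfl

section Convolution

variable {G E E' F : Type*} [NormedAddCommGroup G] [MeasurableSpace G] [BorelSpace G]
  [NormedAddCommGroup E] [NormedSpace ℝ E] [NormedAddCommGroup E'] [NormedSpace ℝ E']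
  [NormedAddCommGroup F] [NormedSpace ℝ F]
  {μ : Measure G} [μ.IsAddLeftInvariant] [μ.IsNegInvariant]

theorem norm_convolution_le_of_norm_le_div_pow (L : E →L[ℝ] E' →L[ℝ] F) {K : G → E}
    {g : G → E'} {A r : ℝ} {n : ℕ} (hA : 0 ≤ A) (hK : ∀ t, ‖K t‖ ≤ A / ‖t‖ ^ n)
    (hg : Integrable g μ) (hr : 0 < r) (hsupp : Function.support g ⊆ closedBall 0 r) {x : G}
    (hx : 2 * r ≤ ‖x‖) :
    ‖(K ⋆[L, μ] g) x‖ ≤ 2 ^ n * ‖L‖ * A * (∫ t, ‖g t‖ ∂μ) / ‖x‖ ^ n := by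
  have hx0 : 0 < ‖x‖ := by linarith
  have hpointwise : ∀ t, ‖L (K (x - t)) (g t)‖ ≤ 2 ^ n * ‖L‖ * A / ‖x‖ ^ n * ‖g t‖ := by
    intro t
    by_cases ht : g t = 0
    · simp only [ht, map_zero, norm_zero, mul_zero, le_refl]
    have htr : ‖t‖ ≤ r := mem_closedBall_zero_iff.1 (hsupp ht)
    have hhalf : ‖x‖ / 2 ≤ ‖x - t‖ := by linarith [norm_sub_norm_le x t]
    have hKxt : ‖K (x - t)‖ ≤ 2 ^ n * A / ‖x‖ ^ n :=
      calc ‖K (x - t)‖ ≤ A / ‖x - t‖ ^ n := hK _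
        _ ≤ A / (‖x‖ / 2) ^ n := by gcongr
        _ = 2 ^ n * A / ‖x‖ ^ n := by rw [div_pow]; field_simp
    calc ‖L (K (x - t)) (g t)‖ ≤ ‖L‖ * ‖K (x - t)‖ * ‖g t‖ := L.le_opNorm₂ _ _
      _ ≤ ‖L‖ * (2 ^ n * A / ‖x‖ ^ n) * ‖g t‖ := by gcongr
      _ = 2 ^ n * ‖L‖ * A / ‖x‖ ^ n * ‖g t‖ := by ring
  rw [convolution_eq_swap]
  refine (norm_integral_le_of_norm_le (hg.norm.const_mul _) (.of_forall hpointwise)).trans_eq ?_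
  rw [integral_const_mul]
  ring

theorem HasCompactSupport.exists_norm_convolution_le_div_pow (L : E →L[ℝ] E' →L[ℝ] F)
    {K : G → E} {g : G → E'} {A : ℝ} {n : ℕ} (hA : 0 ≤ A) (hK : ∀ t, ‖K t‖ ≤ A / ‖t‖ ^ n)
    (hg : Integrable g μ) (hcg : HasCompactSupport g) :
    ∃ c > 0, ∃ R > 0, ∀ x, R ≤ ‖x‖ → ‖(K ⋆[L, μ] g) x‖ ≤ c / ‖x‖ ^ n := by
  obtain ⟨r, hr, hsupp⟩ := hcg.isBounded.subset_closedBall_lt 0 0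
  refine ⟨2 ^ n * ‖L‖ * A * (∫ t, ‖g t‖ ∂μ) + 1, by positivity, 2 * r, by positivity,
    fun x hx => ?_⟩
  grw [norm_convolution_le_of_norm_le_div_pow L hA hK hg hr
    ((subset_tsupport g).trans hsupp) hx]
  gcongr
  linarith

end Convolution

section Decay

variable {E F : Type*} [NormedAddCommGroup E] [NormedAddCommGroup F]

theorem Continuous.exists_norm_le_div_one_add_norm_pow [ProperSpace E] {f : E → F}
    (hf : Continuous f) {c R : ℝ} {n : ℕ} (hdecay : ∀ x, R ≤ ‖x‖ → ‖f x‖ ≤ c / ‖x‖ ^ n) :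
    ∃ C, ∀ x, ‖f x‖ ≤ C / (1 + ‖x‖) ^ n := by
  set R₁ := max R 1
  obtain ⟨M, hM⟩ := (isCompact_closedBall (0 : E) R₁).exists_bound_of_continuousOn
    hf.continuousOn
  refine ⟨max (M * (1 + R₁) ^ n) (2 ^ n * c), fun x => ?_⟩
  have hpos : 0 < (1 + ‖x‖) ^ n := by positivity
  rcases le_total ‖x‖ R₁ with hx | hx
  · have hM0 : 0 ≤ M := (norm_nonneg _).trans (hM 0 (mem_closedBall_self (by positivity)))
    calc ‖f x‖ ≤ M := hM x (mem_closedBall_zero_iff.2 hx)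
      _ ≤ M * (1 + R₁) ^ n / (1 + ‖x‖) ^ n := by
        rw [le_div_iff₀ hpos]; gcongr
      _ ≤ _ := by gcongr; exact le_max_left _ _
  · have hx1 : 1 ≤ ‖x‖ := (le_max_right _ _).trans hx
    have hfx := hdecay x ((le_max_left _ _).trans hx)
    have hc : 0 ≤ c := by
      have := (norm_nonneg _).trans hfx
      rwa [le_div_iff₀ (by positivity), zero_mul] at this
    calc ‖f x‖ ≤ c / ‖x‖ ^ n := hfx
      _ = 2 ^ n * c / (2 * ‖x‖) ^ n := by field_simp; ring
      _ ≤ 2 ^ n * c / (1 + ‖x‖) ^ n := by gcongr; linarith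
      _ ≤ _ := by gcongr; exact le_max_right _ _

variable [NormedSpace ℝ E] [FiniteDimensional ℝ E] [MeasurableSpace E] [BorelSpace E]
  {μ : Measure E} [μ.IsAddHaarMeasure]

theorem memLp_of_norm_le_div_one_add_norm_pow {f : E → F} {C : ℝ} {n : ℕ} {p : ℝ≥0∞}
    (hf : AEStronglyMeasurable f μ) (hbound : ∀ x, ‖f x‖ ≤ C / (1 + ‖x‖) ^ n) (hn : n ≠ 0)
    (hp : (finrank ℝ E : ℝ≥0∞) / n < p) : MemLp f p μ := by
  have hC : 0 ≤ C := by simpa using (norm_nonneg _).trans (hbound 0)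
  rcases eq_or_ne p ⊤ with rfl | hp_top
  · exact memLp_top_of_bound hf C
      (.of_forall fun x => (hbound x).trans (div_le_self hC (one_le_pow₀ (by simp))))
  have hp0 : p ≠ 0 := (zero_le.trans_lt hp).ne'
  have hdim : (finrank ℝ E : ℝ) < n * p.toReal := by
    rw [ENNReal.div_lt_iff (by simp [hn]) (by simp)] at hp
    simpa [mul_comm] using ENNReal.toReal_strict_mono (ENNReal.mul_ne_top hp_top (by simp)) hp
  rw [← integrable_norm_rpow_iff hf hp0 hp_top]
  refine ((integrable_one_add_norm hdim).const_mul (C ^ p.toReal)).mono'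
    (hf.norm.aemeasurable.pow_const _).aestronglyMeasurable (.of_forall fun x => ?_)
  rw [Real.norm_of_nonneg (by positivity)]
  calc ‖f x‖ ^ p.toReal ≤ (C / (1 + ‖x‖) ^ n) ^ p.toReal := by gcongr; exact hbound x
    _ = C ^ p.toReal * (1 + ‖x‖) ^ (-(n * p.toReal)) := by
      rw [Real.div_rpow hC (by positivity), ← Real.rpow_natCast, ← Real.rpow_mul (by positivity),
        Real.rpow_neg (by positivity), div_eq_mul_inv]

end Decay

def biotSavartKernel (t : E3) : E3 := (4 * Real.pi * ‖t‖ ^ 3)⁻¹ • t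

def biotSavart (ω₀ : E3 → E3) : E3 → E3 := -(biotSavartKernel ⋆[cross3L] ω₀)

lemma norm_biotSavartKernel (t : E3) : ‖biotSavartKernel t‖ = (4 * Real.pi)⁻¹ / ‖t‖ ^ 2 := by
  rcases eq_or_ne t 0 with rfl | ht
  · simp [biotSavartKernel]
  have : 0 < ‖t‖ := norm_pos_iff.2 ht
  rw [biotSavartKernel, norm_smul, Real.norm_of_nonneg (by positivity)]
  field_simp

lemma locallyIntegrable_biotSavartKernel : LocallyIntegrable biotSavartKernel volume := by
  refine locallyIntegrable_of_norm_le_rpow (α := 2) (C := (4 * Real.pi)⁻¹) (by simp)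
    (by norm_num) (.of_forall fun t => ?_) (by unfold biotSavartKernel; fun_prop)
  rw [norm_biotSavartKernel, Real.rpow_neg (norm_nonneg _), div_eq_mul_inv]
  norm_cast

lemma biotSavart_apply (ω₀ : E3 → E3) (x : E3) :
    biotSavart ω₀ x = -∫ y, (4 * Real.pi * ‖x - y‖ ^ 3)⁻¹ • cross3 (x - y) (ω₀ y) := by
  simp only [biotSavart, Pi.neg_apply, convolution_eq_swap, biotSavartKernel, map_smul,
    smul_apply, cross3L_apply]

lemma continuous_biotSavart {ω₀ : E3 → E3} (hω : Continuous ω₀) (hsupp : HasCompactSupport ω₀) :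
    Continuous (biotSavart ω₀) :=
  (hsupp.continuous_convolution_right cross3L locallyIntegrable_biotSavartKernel hω).neg

lemma exists_norm_biotSavart_le_div_sq {ω₀ : E3 → E3} (hω : Continuous ω₀)
    (hsupp : HasCompactSupport ω₀) :
    ∃ c > 0, ∃ R > 0, ∀ x, R ≤ ‖x‖ → ‖biotSavart ω₀ x‖ ≤ c / ‖x‖ ^ 2 := by
  simpa [biotSavart] using hsupp.exists_norm_convolution_le_div_pow cross3L (by positivity)
    (fun t => (norm_biotSavartKernel t).le) (hω.integrable_of_hasCompactSupport hsupp)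

/-- The Biot–Savart field of a smooth compactly supported vorticity is continuous,
decays like ‖x‖⁻² at infinity, and belongs to Lᵖ for every p ∈ (3/2, ∞]. -/
theorem biotSavart_decay_and_Lp
    (ω₀ : E3 → E3) (hω : ContDiff ℝ ∞ ω₀) (hωsupp : HasCompactSupport ω₀)
    (v₀ : E3 → E3)
    (hv₀ : ∀ x : E3, v₀ x =
      -∫ y : E3, (4 * Real.pi * ‖x - y‖ ^ 3)⁻¹ • cross3 (x - y) (ω₀ y)) :
    Continuous v₀ ∧
    (∃ c > 0, ∃ R > 0, ∀ x : E3, R ≤ ‖x‖ → ‖v₀ x‖ ≤ c / ‖x‖ ^ 2) ∧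
    (∀ p : ENNReal, 3 / 2 < p → p ≤ ⊤ → MemLp v₀ p (volume : Measure E3)) := by
  obtain rfl : v₀ = biotSavart ω₀ := funext fun x => (hv₀ x).trans (biotSavart_apply ω₀ x).symm
  have hcont := continuous_biotSavart hω.continuous hωsupp
  have hdecay := exists_norm_biotSavart_le_div_sq hω.continuous hωsupp
  refine ⟨hcont, hdecay, fun p hp _ => ?_⟩
  obtain ⟨c, -, R, -, hcR⟩ := hdecay
  obtain ⟨C, hC⟩ := hcont.exists_norm_le_div_one_add_norm_pow hcR
  refine memLp_of_norm_le_div_one_add_norm_pow hcont.aestronglyMeasurable hC two_ne_zero ?_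
  simpa [finrank_euclideanSpace] using hp
end
end

section
/- Let C ⊂ ℝ³ be a C² injective compact curve, η_n the cutoff functions built from a smooth profile χ, and φ : ℝ³ → ℝ³ a smooth compactly supported vector field with div φ = 0 pointwise. Set g_n(x) = ⟪φ(x), ∇η_n(x)⟫. Then there exist n₀ ∈ ℕ and a constant C₀ > 0 (depending on φ, C and χ but not on n) such that for all n > n₀: ∫_{ℝ³} g_n(x) dx = 0, and for every p ∈ [1, ∞), ‖g_n‖_{L^p(ℝ³)} ≤ C₀ · n^{1 − 2/p}. -/
open MeasureTheory Metric Set Filter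
open scoped RealInnerProductSpace ContDiff SchwartzMap

noncomputable section

/-! The cutoff `η n = χ (n * infDist · C)` is `O(n)`-Lipschitz, because `χ'` is bounded on
`[0, ∞)` and `infDist · C` is `1`-Lipschitz. By Rademacher's theorem we may integrate by parts
against `φ`, so `∫ g n = -∫ η n * div φ = 0`. Moreover `|g n| = O(n)`, and `g n` vanishes outside
the tube `{infDist · C ≤ 2 / n}`; along the unit-speed curve this tube is covered by `O(n)` balls
of radius `4 / n`, so its volume is `O(n⁻²)`. Hence `∫ |g n| ^ p = O(n ^ p * n⁻²)`. -/

open Module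
open scoped NNReal Topology

theorem exists_lipschitzOnWith_Ici_of_eq_const {χ : ℝ → ℝ} (hχ : ContDiff ℝ 1 χ) {b c : ℝ}
    (hconst : ∀ s, b < s → χ s = c) (a : ℝ) : ∃ K, LipschitzOnWith K χ (Ici a) := by
  obtain ⟨M, hM⟩ := (isCompact_Icc : IsCompact (Icc a b)).exists_bound_of_continuousOn
    (hχ.continuous_deriv le_rfl).continuousOn
  have hderiv : ∀ s, b < s → deriv χ s = 0 := fun s hs => by
    have hnear : χ =ᶠ[𝓝 s] fun _ => c := (eventually_gt_nhds hs).mono fun t ht => hconst t ht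
    rw [hnear.deriv_eq, deriv_const]
  refine ⟨M.toNNReal, (convex_Ici a).lipschitzOnWith_of_nnnorm_deriv_le
    (fun s _ => (hχ.differentiable one_ne_zero) s) fun s hs => ?_⟩
  rw [← NNReal.coe_le_coe, coe_nnnorm, Real.coe_toNNReal']
  rcases le_or_gt s b with hsb | hsb
  · exact (hM s ⟨hs, hsb⟩).trans (le_max_left _ _)
  · simp [hderiv s hsb]

theorem LipschitzOnWith.lipschitzWith_comp_mul_infDist {X : Type*} [PseudoMetricSpace X]
    {χ : ℝ → ℝ} {K : ℝ≥0} (hχ : LipschitzOnWith K χ (Ici 0)) (C : Set X) (t : ℝ≥0) :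
    LipschitzWith (K * t) fun x => χ (t * infDist x C) := by
  have hinner : LipschitzWith t fun x => (t : ℝ) * infDist x C := by
    have := (lipschitzWith_smul (t : ℝ)).comp (lipschitz_infDist_pt C)
    simpa only [NNReal.nnnorm_eq, mul_one, smul_eq_mul, Function.comp_def] using this
  exact lipschitzOnWith_univ.1 <| hχ.comp hinner.lipschitzOnWith
    fun x _ => mul_nonneg t.2 infDist_nonneg

theorem fderiv_comp_mul_infDist_eq_zero {E : Type*} [NormedAddCommGroup E] [NormedSpace ℝ E]
    {χ : ℝ → ℝ} {b c : ℝ} (hconst : ∀ s, b < s → χ s = c) (C : Set E) {t : ℝ} (ht : 0 < t)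
    {x : E} (hx : b / t < infDist x C) :
    fderiv ℝ (fun y => χ (t * infDist y C)) x = 0 := by
  have hnear : (fun y => χ (t * infDist y C)) =ᶠ[𝓝 x] fun _ => c := by
    filter_upwards [(isOpen_lt continuous_const (continuous_infDist_pt C)).mem_nhds hx]
      with y hy
    exact hconst _ (by rwa [div_lt_iff₀' ht] at hy)
  rw [hnear.fderiv_eq, fderiv_const_apply]

theorem LipschitzWith.norm_fderiv_apply_le {E F : Type*} [NormedAddCommGroup E]
    [NormedSpace ℝ E] [NormedAddCommGroup F] [NormedSpace ℝ F] {u : E → F} {K : ℝ≥0}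
    (hu : LipschitzWith K u) (x : E) {v : E} {B : ℝ} (hv : ‖v‖ ≤ B) :
    ‖fderiv ℝ u x v‖ ≤ K * B :=
  ((fderiv ℝ u x).le_opNorm v).trans
    (mul_le_mul (norm_fderiv_le_of_lipschitz ℝ hu) hv (norm_nonneg _) K.2)

section IntegrationByParts

variable {E : Type*} [NormedAddCommGroup E] [NormedSpace ℝ E] [MeasurableSpace E] [BorelSpace E]
  {μ : Measure E} {u : E → ℝ} {K : ℝ≥0}

theorem LipschitzWith.integral_mul_fderiv_eq_neg_integral_mul_fderiv [FiniteDimensional ℝ E]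
    [μ.IsAddHaarMeasure] (hu : LipschitzWith K u)
    {f : E → ℝ} (hf : ContDiff ℝ 1 f) (hfs : HasCompactSupport f) (v : E) :
    ∫ x, f x * fderiv ℝ u x v ∂μ = -∫ x, u x * fderiv ℝ f x v ∂μ := by
  obtain ⟨D, hD⟩ := hf.lipschitzWith_of_hasCompactSupport hfs one_ne_zero
  have hu' : ∫ x, lineDeriv ℝ u x v * f x ∂μ = ∫ x, f x * fderiv ℝ u x v ∂μ := by
    refine integral_congr_ae ?_
    filter_upwards [hu.ae_differentiableAt] with x hx
    rw [hx.lineDeriv_eq_fderiv, mul_comm]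
  have hf' : ∀ x, lineDeriv ℝ f x (-v) * u x = -(u x * fderiv ℝ f x v) := fun x => by
    rw [(hf.differentiable one_ne_zero x).lineDeriv_eq_fderiv, map_neg]
    ring
  rw [← hu', hu.integral_lineDeriv_mul_eq hD hfs v, ← integral_neg]
  simp_rw [hf']

theorem LipschitzWith.integrable_mul_fderiv (hu : LipschitzWith K u) {f : E → ℝ}
    (hf : Integrable f μ) (v : E) : Integrable (fun x => f x * fderiv ℝ u x v) μ :=
  hf.mul_bdd (measurable_fderiv_apply_const ℝ u v).aestronglyMeasurable
    (Eventually.of_forall fun x => hu.norm_fderiv_apply_le x le_rfl)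

end IntegrationByParts

theorem fderiv_apply_euclideanSpace {ι : Type*} [Fintype ι] {E : Type*} [NormedAddCommGroup E]
    [NormedSpace ℝ E] {φ : E → EuclideanSpace ℝ ι} {x : E} (hφ : DifferentiableAt ℝ φ x) (i : ι)
    (v : E) : fderiv ℝ (fun y => φ y i) x v = fderiv ℝ φ x v i := by
  change fderiv ℝ (EuclideanSpace.proj i ∘ φ) x v = _
  rw [((EuclideanSpace.proj i).hasFDerivAt.comp x hφ.hasFDerivAt).fderiv]
  rfl

theorem LipschitzWith.integral_fderiv_apply_eq_neg_integral_mul_divergence {ι : Type*}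
    [Fintype ι] [DecidableEq ι] {μ : Measure (EuclideanSpace ℝ ι)} [μ.IsAddHaarMeasure]
    {u : EuclideanSpace ℝ ι → ℝ} {K : ℝ≥0} (hu : LipschitzWith K u)
    {φ : EuclideanSpace ℝ ι → EuclideanSpace ℝ ι} (hφ : ContDiff ℝ 1 φ)
    (hφs : HasCompactSupport φ) :
    ∫ x, fderiv ℝ u x (φ x) ∂μ =
      -∫ x, u x * ∑ i, fderiv ℝ φ x (EuclideanSpace.single i 1) i ∂μ := by
  set e : ι → EuclideanSpace ℝ ι := fun i => EuclideanSpace.single i 1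
  have hφi : ∀ i, ContDiff ℝ 1 (fun x => φ x i) := fun i =>
    (EuclideanSpace.proj i : EuclideanSpace ℝ ι →L[ℝ] ℝ).contDiff.comp hφ
  have hφis : ∀ i, HasCompactSupport (fun x => φ x i) := fun i =>
    hφs.comp_left (g := fun v : EuclideanSpace ℝ ι => v i) rfl
  have hterm : ∀ i, ∫ x, φ x i * fderiv ℝ u x (e i) ∂μ =
      -∫ x, u x * fderiv ℝ φ x (e i) i ∂μ := fun i => by
    simp_rw [hu.integral_mul_fderiv_eq_neg_integral_mul_fderiv (hφi i) (hφis i) (e i),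
      fderiv_apply_euclideanSpace (hφ.differentiable one_ne_zero _)]
  have hint : ∀ i, Integrable (fun x => u x * fderiv ℝ φ x (e i) i) μ := by
    intro i
    refine (hu.continuous.mul ?_).integrable_of_hasCompactSupport ?_
    · exact (EuclideanSpace.proj i).continuous.comp
        ((hφ.continuous_fderiv one_ne_zero).clm_apply continuous_const)
    · have hcs : HasCompactSupport (fun x => fderiv ℝ φ x (e i) i) :=
        (hφs.fderiv ℝ).comp_left
          (g := fun L : EuclideanSpace ℝ ι →L[ℝ] EuclideanSpace ℝ ι => L (e i) i) (by simp)
      exact hcs.mul_left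
  have hdecomp : ∀ x, fderiv ℝ u x (φ x) = ∑ i, φ x i * fderiv ℝ u x (e i) := fun x => by
    conv_lhs => rw [← (EuclideanSpace.basisFun ι ℝ).sum_repr (φ x)]
    simp [e, map_sum]
  simp_rw [hdecomp, Finset.mul_sum]
  rw [integral_finsetSum _ fun i _ => hu.integrable_mul_fderiv
      ((hφi i).continuous.integrable_of_hasCompactSupport (hφis i)) (e i),
    integral_finsetSum _ fun i _ => hint i, ← Finset.sum_neg_distrib]
  exact Finset.sum_congr rfl fun i _ => hterm i

theorem setOf_infDist_image_le_subset_biUnion {X : Type*} [PseudoMetricSpace X] {γ : ℝ → X}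
    {L r : ℝ} (hL : 0 ≤ L) (hr : 0 < r)
    (hγ : LipschitzOnWith 1 γ (Icc 0 L)) :
    {x | infDist x (γ '' Icc 0 L) ≤ r} ⊆
      ⋃ k ∈ Finset.range (⌊L / r⌋₊ + 1), closedBall (γ (k * r)) (2 * r) := by
  intro x hx
  have hcpt : IsCompact (γ '' Icc 0 L) := isCompact_Icc.image_of_continuousOn hγ.continuousOn
  obtain ⟨_, ⟨s, hs, rfl⟩, hxs⟩ := hcpt.exists_infDist_eq_dist ((nonempty_Icc.2 hL).image γ) x
  set k := ⌊s / r⌋₊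
  have hkr : k * r ≤ s := (le_div_iff₀ hr).1 (Nat.floor_le (div_nonneg hs.1 hr.le))
  have hsk : s - k * r ≤ r := by
    have := Nat.lt_floor_add_one (s / r)
    rw [div_lt_iff₀ hr] at this
    linarith
  have hk : k ∈ Finset.range (⌊L / r⌋₊ + 1) :=
    Finset.mem_range_succ_iff.2 (Nat.floor_mono (div_le_div_of_nonneg_right hs.2 hr.le))
  have hkmem : (k : ℝ) * r ∈ Icc 0 L := ⟨by positivity, hkr.trans hs.2⟩
  refine mem_biUnion hk (mem_closedBall.2 ?_)
  calc dist x (γ (k * r)) ≤ dist x (γ s) + dist (γ s) (γ (k * r)) := dist_triangle _ _ _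
    _ ≤ r + 1 * dist s (k * r) := by
        gcongr
        · exact hxs ▸ hx
        · exact hγ.dist_le_mul s hs _ hkmem
    _ ≤ 2 * r := by
        rw [one_mul, Real.dist_eq, abs_of_nonneg (by linarith)]; linarith

theorem measure_setOf_infDist_image_le {E : Type*} [NormedAddCommGroup E] [NormedSpace ℝ E]
    [MeasurableSpace E] [BorelSpace E] [FiniteDimensional ℝ E] (μ : Measure E)
    [μ.IsAddHaarMeasure] {γ : ℝ → E} {L r : ℝ} (hL : 0 ≤ L) (hr : 0 < r)
    (hγ : LipschitzOnWith 1 γ (Icc 0 L)) :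
    μ {x | infDist x (γ '' Icc 0 L) ≤ r} ≤
      ENNReal.ofReal ((L / r + 1) * (2 * r) ^ finrank ℝ E * μ.real (ball 0 1)) := by
  calc μ {x | infDist x (γ '' Icc 0 L) ≤ r}
      ≤ ∑ k ∈ Finset.range (⌊L / r⌋₊ + 1), μ (closedBall (γ (k * r)) (2 * r)) :=
        (measure_mono (setOf_infDist_image_le_subset_biUnion hL hr hγ)).trans
          (measure_biUnion_finset_le _ _)
    _ = ENNReal.ofReal ((⌊L / r⌋₊ + 1) * (2 * r) ^ finrank ℝ E * μ.real (ball 0 1)) := by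
        simp_rw [Measure.addHaar_closedBall μ _ (by positivity : 0 ≤ 2 * r)]
        rw [Finset.sum_const, Finset.card_range, nsmul_eq_mul,
          ← ofReal_measureReal measure_ball_lt_top.ne, ← ENNReal.ofReal_mul (by positivity), ← ENNReal.ofReal_natCast,
          ← ENNReal.ofReal_mul (by positivity)]
        push_cast; ring_nf
    _ ≤ _ := by
        gcongr
        exact Nat.floor_le (by positivity)

theorem volume_setOf_infDist_image_le_two_div {γ : ℝ → E3} {L : ℝ} (hL : 0 ≤ L)
    (hγ : LipschitzOnWith 1 γ (Icc 0 L)) {n : ℕ} (hn : 2 ≤ n) :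
    volume {x | infDist x (γ '' Icc 0 L) ≤ 2 / n} ≤
      ENNReal.ofReal (32 * (L + 1) * volume.real (ball (0 : E3) 1) / n ^ 2) := by
  have hn' : (2 : ℝ) ≤ n := by exact_mod_cast hn
  refine (measure_setOf_infDist_image_le volume hL (by positivity) hγ).trans
    (ENNReal.ofReal_le_ofReal ?_)
  rw [finrank_euclideanSpace_fin]
  have key : (L / (2 / n) + 1) * (2 * (2 / n)) ^ 3 ≤ 32 * (L + 1) / n ^ 2 := by
    calc (L / (2 / n) + 1) * (2 * (2 / n)) ^ 3 = 32 * (L + 2 / n) / n ^ 2 := by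
          field_simp; ring
      _ ≤ 32 * (L + 1) / n ^ 2 := by
          gcongr; exact (div_le_one (by positivity)).2 hn'
  calc _ ≤ 32 * (L + 1) / n ^ 2 * volume.real (ball (0 : E3) 1) := by gcongr
    _ = _ := by ring

theorem rpow_integral_abs_rpow_le_mul_measureReal {α : Type*} [MeasurableSpace α]
    {μ : Measure α} {f : α → ℝ} {S : Set α} {M p : ℝ} (hM : 0 ≤ M) (hp : 0 < p)
    (hf : ∀ x, |f x| ≤ M) (hfS : ∀ x ∉ S, f x = 0) (hS : μ S < ⊤) :
    (∫ x, |f x| ^ p ∂μ) ^ (1 / p) ≤ M * μ.real S ^ (1 / p) := by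
  have hint : ∫ x, |f x| ^ p ∂μ ≤ M ^ p * μ.real S := by
    rw [← setIntegral_eq_integral_of_forall_compl_eq_zero fun x hx => by
      rw [hfS x hx, abs_zero, Real.zero_rpow hp.ne']]
    refine (Real.le_norm_self _).trans (norm_setIntegral_le_of_norm_le_const hS fun x _ => ?_)
    rw [Real.norm_eq_abs, abs_of_nonneg (by positivity)]
    exact Real.rpow_le_rpow (abs_nonneg _) (hf x) hp.le
  calc (∫ x, |f x| ^ p ∂μ) ^ (1 / p) ≤ (M ^ p * μ.real S) ^ (1 / p) :=
        Real.rpow_le_rpow (integral_nonneg fun x => by positivity) hint (by positivity)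
    _ = M * μ.real S ^ (1 / p) := by
        rw [Real.mul_rpow (by positivity) measureReal_nonneg, ← Real.rpow_mul hM,
          mul_one_div_cancel hp.ne', Real.rpow_one]

theorem mul_rpow_div_sq_le {A n p : ℝ} (hA : 0 ≤ A) (hn : 0 < n) (hp : 1 ≤ p) :
    n * (A / n ^ 2) ^ (1 / p) ≤ (A + 1) * n ^ (1 - 2 / p) := by
  have hp0 : 0 < p := one_pos.trans_le hp
  have hA1 : A ^ (1 / p) ≤ A + 1 := by
    rcases le_total A 1 with h | h
    · linarith [Real.rpow_le_one hA h (by positivity : 0 ≤ 1 / p)]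
    · linarith [Real.rpow_le_self_of_one_le h ((div_le_one hp0).2 hp)]
  have hsq : (n ^ 2) ^ (1 / p) = n ^ (2 / p) := by
    rw [← Real.rpow_natCast, ← Real.rpow_mul hn.le]; ring_nf
  calc n * (A / n ^ 2) ^ (1 / p) = A ^ (1 / p) * (n / n ^ (2 / p)) := by
        rw [Real.div_rpow hA (by positivity), hsq]; ring
    _ ≤ (A + 1) * n ^ (1 - 2 / p) := by
        rw [Real.rpow_sub hn, Real.rpow_one]; gcongr

theorem rpow_integral_abs_rpow_le_of_measure_le_div_sq {α : Type*} [MeasurableSpace α]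
    {μ : Measure α} {f : α → ℝ} {S : Set α} {M A n p : ℝ} (hM : 0 ≤ M) (hA : 0 ≤ A)
    (hn : 0 < n) (hp : 1 ≤ p) (hf : ∀ x, |f x| ≤ M * n) (hfS : ∀ x ∉ S, f x = 0)
    (hS : μ S ≤ ENNReal.ofReal (A / n ^ 2)) :
    (∫ x, |f x| ^ p ∂μ) ^ (1 / p) ≤ M * (A + 1) * n ^ (1 - 2 / p) :=
  calc (∫ x, |f x| ^ p ∂μ) ^ (1 / p) ≤ M * n * μ.real S ^ (1 / p) :=
        rpow_integral_abs_rpow_le_mul_measureReal (by positivity) (by linarith) hf hfS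
          (hS.trans_lt ENNReal.ofReal_lt_top)
    _ ≤ M * (n * (A / n ^ 2) ^ (1 / p)) := by
        rw [← mul_assoc]
        gcongr
        exact ENNReal.toReal_le_of_le_ofReal (by positivity) hS
    _ ≤ M * (A + 1) * n ^ (1 - 2 / p) := by
        rw [mul_assoc]
        gcongr M * ?_
        exact mul_rpow_div_sq_le hA hn hp

theorem cutoff_divergence_estimates_general
    (γ : ℝ → E3) (L : ℝ) (hL : 0 < L)
    (hγ : ContDiff ℝ 2 γ)
    (harc : ∀ s ∈ Set.Icc (0:ℝ) L, ‖deriv γ s‖ = 1)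
    (C : Set E3) (hC : C = γ '' Set.Icc 0 L)
    (χ : ℝ → ℝ) (hχ : ContDiff ℝ ∞ χ)
    (hχ1 : ∀ s : ℝ, 2 < s → χ s = 1)
    (η : ℕ → E3 → ℝ) (hη : ∀ n x, η n x = χ (n * Metric.infDist x C))
    (φ : E3 → E3) (hφ : ContDiff ℝ ∞ φ) (hφsupp : HasCompactSupport φ)
    (hφdiv : ∀ x : E3, div3 φ x = 0)
    (g : ℕ → E3 → ℝ) (hg : ∀ n x, g n x = ⟪φ x, gradient (η n) x⟫) :
    ∃ n₀ : ℕ, ∃ C₀ > 0, ∀ n : ℕ, n > n₀ →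
      (∫ x : E3, g n x) = 0 ∧
      ∀ p : ℝ, 1 ≤ p →
        (∫ x : E3, |g n x| ^ p) ^ (1/p) ≤ C₀ * (n : ℝ) ^ (1 - 2/p) := by
  have hγlip : LipschitzOnWith 1 γ (Icc 0 L) :=
    (convex_Icc 0 L).lipschitzOnWith_of_nnnorm_deriv_le
      (fun s _ => hγ.differentiable two_ne_zero s) fun s hs => by
        simp [← NNReal.coe_le_coe, harc s hs]
  obtain ⟨K, hχK⟩ := exists_lipschitzOnWith_Ici_of_eq_const (hχ.of_le (mod_cast le_top)) hχ1 0
  obtain ⟨B, hB⟩ := hφsupp.exists_bound_of_continuous hφ.continuous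
  have hηeq : ∀ n : ℕ, η n = fun x => χ ((n : ℝ≥0) * infDist x C) := fun n => by
    ext x; simp [hη]
  have hηlip : ∀ n : ℕ, LipschitzWith (K * n) (η n) := fun n => by
    simpa [hηeq] using hχK.lipschitzWith_comp_mul_infDist C n
  have hgη : ∀ n x, g n x = fderiv ℝ (η n) x (φ x) := fun n x => by
    rw [hg, inner_gradient_right]; rfl
  set A := 32 * (L + 1) * volume.real (ball (0 : E3) 1)
  have hB0 : 0 ≤ B := (norm_nonneg _).trans (hB 0)
  refine ⟨1, (B * K + 1) * (A + 1), by positivity, fun n hn => ⟨?_, fun p hp => ?_⟩⟩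
  · rw [funext (hgη n), (hηlip n).integral_fderiv_apply_eq_neg_integral_mul_divergence
      (hφ.of_le (mod_cast le_top)) hφsupp]
    change -∫ x, η n x * div3 φ x = 0
    simp [hφdiv]
  have hgS : ∀ y ∉ {x | infDist x C ≤ 2 / n}, g n y = 0 := fun y hy => by
    rw [hgη, hηeq, NNReal.coe_natCast, fderiv_comp_mul_infDist_eq_zero hχ1 C (by positivity)
      (not_le.1 hy), zero_apply]
  have hgbound : ∀ x, |g n x| ≤ B * K * n := fun x => by
    simpa [hgη, mul_comm B, mul_assoc] using (hηlip n).norm_fderiv_apply_le x (hB x)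
  calc (∫ x, |g n x| ^ p) ^ (1 / p) ≤ B * K * (A + 1) * n ^ (1 - 2 / p) :=
        rpow_integral_abs_rpow_le_of_measure_le_div_sq (by positivity) (by positivity)
          (by positivity) hp hgbound hgS
          (hC ▸ volume_setOf_infDist_image_le_two_div hL.le hγlip hn)
    _ ≤ (B * K + 1) * (A + 1) * n ^ (1 - 2 / p) := by gcongr; linarith

/-- For a divergence-free smooth compactly supported φ and the cutoffs η_n around a C²
injective compact curve, g_n = φ · ∇η_n has zero mean and `‖g_n‖_{Lᵖ} ≲ n^{1−2/p}`. -/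
theorem cutoff_divergence_estimates
    (γ : ℝ → E3) (L : ℝ) (hL : 0 < L)
    (hγ : ContDiff ℝ 2 γ) (hγinj : Set.InjOn γ (Set.Icc 0 L))
    (harc : ∀ s ∈ Set.Icc (0:ℝ) L, ‖deriv γ s‖ = 1)
    (C : Set E3) (hC : C = γ '' Set.Icc 0 L)
    (χ : ℝ → ℝ) (hχ : ContDiff ℝ ∞ χ)
    (hχ0 : ∀ s : ℝ, s < 1 → χ s = 0) (hχ1 : ∀ s : ℝ, 2 < s → χ s = 1)
    (η : ℕ → E3 → ℝ) (hη : ∀ n x, η n x = χ (n * Metric.infDist x C))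
    (φ : E3 → E3) (hφ : ContDiff ℝ ∞ φ) (hφsupp : HasCompactSupport φ)
    (hφdiv : ∀ x : E3, div3 φ x = 0)
    (g : ℕ → E3 → ℝ) (hg : ∀ n x, g n x = ⟪φ x, gradient (η n) x⟫) :
    ∃ n₀ : ℕ, ∃ C₀ > 0, ∀ n : ℕ, n > n₀ →
      (∫ x : E3, g n x) = 0 ∧
      ∀ p : ℝ, 1 ≤ p →
        (∫ x : E3, |g n x| ^ p) ^ (1/p) ≤ C₀ * (n : ℝ) ^ (1 - 2/p) :=
  cutoff_divergence_estimates_general γ L hL hγ harc C hC χ hχ hχ1 η hη φ hφ hφsupp hφdiv g hg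
end
end
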